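/- arXiv:1308.2625 — 2 statements merged into one kernel-verified Lean document; each statement's English description precedes it below -/
import Mathlib

section
/- Let n be a positive integer, let l, u ∈ ℝⁿ with l ⪯ u (componentwise), let d ∈ ℝⁿ, and let δ > 0. Then the semi-infinite condition (for all g ∈ ℝⁿ with l ⪯ g ⪯ u, ⟨g, d⟩ ≤ -δ) holds if and only if there exists s ∈ ℝⁿ such that (∑ᵢ sᵢ ≤ -δ) and (for all i, lᵢ·dᵢ ≤ sᵢ and uᵢ·dᵢ ≤ sᵢ). -/
theorem stmt_1 (n : ℕ) (hn : 0 < n) (l u d : Fin n → ℝ) (hlu : ∀ i, l i ≤ u i)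
    (δ : ℝ) (hδ : 0 < δ) :
    (∀ g : Fin n → ℝ, (∀ i, l i ≤ g i ∧ g i ≤ u i) → ∑ i, g i * d i ≤ -δ) ↔
      ∃ s : Fin n → ℝ, (∑ i, s i ≤ -δ) ∧ ∀ i, l i * d i ≤ s i ∧ u i * d i ≤ s i := by
  constructor
  · intro h
    refine ⟨fun i => max (l i * d i) (u i * d i), ?_, fun i => ⟨le_max_left _ _, le_max_right _ _⟩⟩
    have := h (fun i => if 0 ≤ d i then u i else l i) (by
      intro i
      by_cases hd : 0 ≤ d i <;> simp [hd, hlu i, le_refl])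
    calc ∑ i, max (l i * d i) (u i * d i)
        = ∑ i, (if 0 ≤ d i then u i else l i) * d i := by
          apply Finset.sum_congr rfl
          intro i _
          by_cases hd : 0 ≤ d i
          · simp only [hd, if_pos]
            exact max_eq_right (mul_le_mul_of_nonneg_right (hlu i) hd)
          · simp only [hd, if_neg, not_false_iff]
            exact max_eq_left (mul_le_mul_of_nonpos_right (hlu i) (le_of_not_ge hd))
      _ ≤ -δ := this
  · rintro ⟨s, hs, hls⟩ g hg
    calc ∑ i, g i * d i ≤ ∑ i, s i := by
          apply Finset.sum_le_sum
          intro i _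
          by_cases hd : 0 ≤ d i
          · exact le_trans (mul_le_mul_of_nonneg_right (hg i).2 hd) (hls i).2
          · exact le_trans (mul_le_mul_of_nonpos_right (hg i).1 (le_of_not_ge hd)) (hls i).1
      _ ≤ -δ := hs
end

section
/- Let g_p : ℝⁿ → ℝ, u, u' ∈ ℝⁿ with u ≠ u', and κ ∈ ℝⁿ with κᵢ ≥ 0 satisfying the Lipschitz bound g_p(u') - g_p(u) < ∑ᵢ κᵢ·|u'ᵢ - uᵢ|. Suppose g_p(u) < 0, and let u_{K} = u + K·(u' - u) for K ∈ ℝ. If 0 ≤ K ≤ (-g_p(u)) / (∑ᵢ κᵢ·|u'ᵢ - uᵢ|) and the analogous Lipschitz bound holds between u and u_K, then g_p(u_K) < 0 when K > 0, and g_p(u_K) < 0 when K = 0. -/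
theorem stmt_3 (n : ℕ) (gp : (Fin n → ℝ) → ℝ) (u u' : Fin n → ℝ) (hne : u ≠ u')
    (κ : Fin n → ℝ) (hκ : ∀ i, 0 ≤ κ i)
    (hLip : gp u' - gp u < ∑ i, κ i * |u' i - u i|)
    (hfeas : gp u < 0) (K : ℝ)
    (uK : Fin n → ℝ) (huK : uK = fun i => u i + K * (u' i - u i))
    (hK0 : 0 ≤ K) (hKub : K ≤ (-gp u) / (∑ i, κ i * |u' i - u i|))
    (hLipK : uK ≠ u → gp uK - gp u < ∑ i, κ i * |uK i - u i|) :
    (0 < K → gp uK < 0) ∧ (K = 0 → gp uK < 0) := by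
  set S : ℝ := ∑ i, κ i * |u' i - u i| with hS
  have hSnn : 0 ≤ S := Finset.sum_nonneg fun i _ => mul_nonneg (hκ i) (abs_nonneg _)
  have hKS : K * S ≤ -gp u := by
    rcases eq_or_lt_of_le hSnn with h | h
    · rw [← h]; simp; linarith
    · calc K * S ≤ (-gp u) / S * S := by nlinarith
        _ = -gp u := div_mul_cancel₀ _ (ne_of_gt h)
  have key : gp uK < 0 := by
    by_cases h : uK = u
    · rw [h]; exact hfeas
    · have h1 := hLipK h
      have h2 : ∑ i, κ i * |uK i - u i| = K * S := by
        rw [hS, Finset.mul_sum]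
        refine Finset.sum_congr rfl fun i _ => ?_
        rw [huK]
        simp only []
        rw [add_sub_cancel_left, abs_mul, abs_of_nonneg hK0]
        ring
      rw [h2] at h1
      linarith
  exact ⟨fun _ => key, fun _ => key⟩
end
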